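/- Let m ≥ 1 and k ≥ 1 be natural numbers, and let h be an odd natural number with 2^h ≥ 2k + 1. For every real number z with 1 ≤ z ≤ 2^m, the denominator P_m(−z)^h + P_m(z)^h is nonzero and the value S_{m,h}(z) = (P_m(−z)^h − P_m(z)^h)/(P_m(−z)^h + P_m(z)^h) satisfies 1 ≤ S_{m,h}(z) < 1 + 1/k. Moreover, for every real number z with −2^m ≤ z ≤ −1, the denominator is nonzero and −1 − 1/k < S_{m,h}(z) ≤ −1. -/

import Mathlib

open Polynomial

/-- The polynomial `P_m(X) = (X - 1) * ∏_{i=1}^m (X - 2^i)^2` over `ℤ`. -/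
noncomputable def Pm (m : ℕ) : Polynomial ℤ :=
  (X - 1) * ∏ i ∈ Finset.Icc 1 m, (X - C ((2 : ℤ) ^ i)) ^ 2

/-- `S_{m,h}(z) = (P_m(-z)^h - P_m(z)^h) / (P_m(-z)^h + P_m(z)^h)`. -/
noncomputable def S (m h : ℕ) (z : ℝ) : ℝ :=
  ((Polynomial.aeval (-z) (Pm m)) ^ h - (Polynomial.aeval z (Pm m)) ^ h) /
    ((Polynomial.aeval (-z) (Pm m)) ^ h + (Polynomial.aeval z (Pm m)) ^ h)

/-! For `1 ≤ z ≤ 2^m` put `a = -P_m(-z) = (z + 1) ∏ (z + 2^i)^2 > 0` and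
`b = P_m(z) = (z - 1) ∏ (z - 2^i)^2 ≥ 0`. Some `2^i` with `1 ≤ i ≤ m` satisfies
`z ≤ 2^i ≤ 2z`, so `(z - 2^i)^2 ≤ (z + 2^i)^2 / 4`, and comparing the other factors termwise
gives `4b ≤ a`. As `h` is odd, `S_{m,h}(z) = (a^h + b^h) / (a^h - b^h)`, and
`(2k + 1) b^h ≤ (2b)^h < a^h` is exactly `1 ≤ S_{m,h}(z) < 1 + 1/k`.
The negative side follows because `S_{m,h}` is odd. -/

theorem Finset.mul_prod_le_prod_of_le {ι R : Type*} [CommSemiring R] [PartialOrder R]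
    [IsOrderedRing R] {s : Finset ι} {f g : ι → R} {j : ι} {c : R}
    (hf : ∀ i ∈ s, 0 ≤ f i) (hfg : ∀ i ∈ s, f i ≤ g i) (hj : j ∈ s) (hc : 0 ≤ c)
    (hcj : c * f j ≤ g j) :
    c * ∏ i ∈ s, f i ≤ ∏ i ∈ s, g i := by
  classical
  rw [← Finset.mul_prod_erase s f hj, ← Finset.mul_prod_erase s g hj, ← mul_assoc]
  exact mul_le_mul hcj
    (Finset.prod_le_prod (fun i hi => hf i (Finset.mem_of_mem_erase hi))
      fun i hi => hfg i (Finset.mem_of_mem_erase hi))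
    (Finset.prod_nonneg fun i hi => hf i (Finset.mem_of_mem_erase hi))
    ((mul_nonneg hc (hf j hj)).trans hcj)

theorem exists_two_pow_mem_Icc {m : ℕ} (hm : 1 ≤ m) {z : ℝ} (hz1 : 1 ≤ z) (hzm : z ≤ 2 ^ m) :
    ∃ i ∈ Finset.Icc 1 m, z ≤ 2 ^ i ∧ 2 ^ i ≤ 2 * z := by
  induction m, hm using Nat.le_induction with
  | base => exact ⟨1, by simp, by simpa using hzm, by linarith⟩
  | succ n hn ih =>
    by_cases hzn : z ≤ 2 ^ n
    · obtain ⟨i, hi, hzi, hiz⟩ := ih hzn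
      exact ⟨i, Finset.Icc_subset_Icc_right n.le_succ hi, hzi, hiz⟩
    · refine ⟨n + 1, Finset.mem_Icc.2 ⟨by omega, le_rfl⟩, hzm, ?_⟩
      rw [pow_succ]
      linarith

theorem aeval_Pm (m : ℕ) (z : ℝ) :
    aeval z (Pm m) = (z - 1) * ∏ i ∈ Finset.Icc 1 m, (z - 2 ^ i) ^ 2 := by
  simp only [Pm, map_mul, map_prod, map_pow, map_sub, aeval_X, aeval_one, map_ofNat]

theorem aeval_neg_Pm (m : ℕ) (z : ℝ) :
    aeval (-z) (Pm m) = -((z + 1) * ∏ i ∈ Finset.Icc 1 m, (z + 2 ^ i) ^ 2) := by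
  rw [aeval_Pm, Finset.prod_congr rfl fun i _ => (by ring : (-z - 2 ^ i) ^ 2 = (z + 2 ^ i) ^ 2)]
  ring

theorem aeval_Pm_nonneg (m : ℕ) {z : ℝ} (hz : 1 ≤ z) : 0 ≤ aeval z (Pm m) := by
  rw [aeval_Pm]
  exact mul_nonneg (by linarith) (Finset.prod_nonneg fun i _ => sq_nonneg _)

theorem aeval_neg_Pm_neg (m : ℕ) {z : ℝ} (hz : 0 ≤ z) : aeval (-z) (Pm m) < 0 := by
  rw [aeval_neg_Pm, neg_neg_iff_pos]
  exact mul_pos (by linarith) (Finset.prod_pos fun i _ => by positivity)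

theorem four_mul_aeval_Pm_le {m : ℕ} (hm : 1 ≤ m) {z : ℝ} (hz1 : 1 ≤ z) (hzm : z ≤ 2 ^ m) :
    4 * aeval z (Pm m) ≤ -aeval (-z) (Pm m) := by
  obtain ⟨j, hj, hzj, hjz⟩ := exists_two_pow_mem_Icc hm hz1 hzm
  have hprod : 4 * ∏ i ∈ Finset.Icc 1 m, (z - 2 ^ i) ^ 2 ≤
      ∏ i ∈ Finset.Icc 1 m, (z + 2 ^ i) ^ 2 := by
    refine Finset.mul_prod_le_prod_of_le (fun i _ => sq_nonneg _) (fun i _ => ?_) hj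
      (by norm_num) (by nlinarith)
    have : (0 : ℝ) < 2 ^ i := by positivity
    nlinarith
  rw [aeval_Pm, aeval_neg_Pm, neg_neg, mul_left_comm]
  exact mul_le_mul (by linarith) hprod (by positivity) (by linarith)

theorem S_neg (m h : ℕ) (z : ℝ) : S m h (-z) = -S m h z := by
  rw [S, S, neg_neg, ← neg_div, neg_sub, add_comm]

theorem one_le_add_div_sub_lt {k u v : ℝ} (hk : 0 < k) (hv : 0 ≤ v) (huv : (2 * k + 1) * v < u) :
    1 ≤ (u + v) / (u - v) ∧ (u + v) / (u - v) < 1 + 1 / k := by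
  have hsub : 0 < u - v := by nlinarith
  constructor
  · rw [le_div_iff₀ hsub]
    linarith
  · rw [div_lt_iff₀ hsub, ← sub_pos]
    have : (1 + 1 / k) * (u - v) - (u + v) = (u - (2 * k + 1) * v) / k := by
      field_simp
      ring
    rw [this]
    exact div_pos (by linarith) hk

theorem mul_pow_lt_pow_of_two_mul_lt {k h : ℕ} (hh : 2 * k + 1 ≤ 2 ^ h) (hh0 : h ≠ 0)
    {a b : ℝ} (hb : 0 ≤ b) (hab : 2 * b < a) : (2 * k + 1) * b ^ h < a ^ h := by
  have hh' : (2 * k + 1 : ℝ) ≤ 2 ^ h := by exact_mod_cast hh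
  calc (2 * k + 1) * b ^ h ≤ 2 ^ h * b ^ h := by gcongr
    _ = (2 * b) ^ h := (mul_pow 2 b h).symm
    _ < a ^ h := pow_lt_pow_left₀ hab (by positivity) hh0

theorem odd_pow_sub_div_odd_pow_add_bounds {h : ℕ} (hodd : Odd h) {k a b : ℝ} (hk : 0 < k)
    (hb : 0 ≤ b) (hab : (2 * k + 1) * b ^ h < a ^ h) :
    (-a) ^ h + b ^ h ≠ 0 ∧ 1 ≤ ((-a) ^ h - b ^ h) / ((-a) ^ h + b ^ h) ∧
      ((-a) ^ h - b ^ h) / ((-a) ^ h + b ^ h) < 1 + 1 / k := by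
  have hbh : 0 ≤ b ^ h := by positivity
  rw [hodd.neg_pow, ← neg_div_neg_eq, neg_add', neg_neg, neg_sub', neg_neg, sub_neg_eq_add]
  exact ⟨by nlinarith, one_le_add_div_sub_lt hk hbh hab⟩

theorem S_bounds_of_one_le {m k h : ℕ} (hm : 1 ≤ m) (hk : 1 ≤ k) (hodd : Odd h)
    (hh : 2 * k + 1 ≤ 2 ^ h) {z : ℝ} (hz1 : 1 ≤ z) (hzm : z ≤ 2 ^ m) :
    (aeval (-z) (Pm m)) ^ h + (aeval z (Pm m)) ^ h ≠ 0 ∧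
      1 ≤ S m h z ∧ S m h z < 1 + 1 / (k : ℝ) := by
  have ha0 : 0 < -aeval (-z) (Pm m) := neg_pos.2 (aeval_neg_Pm_neg m (by linarith))
  have hb0 : 0 ≤ aeval z (Pm m) := aeval_Pm_nonneg m hz1
  have hab : 2 * aeval z (Pm m) < -aeval (-z) (Pm m) := by
    linarith [four_mul_aeval_Pm_le hm hz1 hzm]
  have hkey := mul_pow_lt_pow_of_two_mul_lt hh hodd.pos.ne' hb0 hab
  simpa only [S, neg_neg] using
    odd_pow_sub_div_odd_pow_add_bounds hodd (by exact_mod_cast hk) hb0 hkey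

theorem S_bounds (m k h : ℕ) (hm : 1 ≤ m) (hk : 1 ≤ k)
    (hodd : Odd h) (hh : 2 * k + 1 ≤ 2 ^ h) :
    (∀ z : ℝ, 1 ≤ z → z ≤ 2 ^ m →
      (Polynomial.aeval (-z) (Pm m)) ^ h + (Polynomial.aeval z (Pm m)) ^ h ≠ 0 ∧
      1 ≤ S m h z ∧ S m h z < 1 + 1 / (k : ℝ)) ∧
    (∀ z : ℝ, -(2 ^ m) ≤ z → z ≤ -1 →
      (Polynomial.aeval (-z) (Pm m)) ^ h + (Polynomial.aeval z (Pm m)) ^ h ≠ 0 ∧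
      -1 - 1 / (k : ℝ) < S m h z ∧ S m h z ≤ -1) := by
  refine ⟨fun z hz1 hzm => S_bounds_of_one_le hm hk hodd hh hz1 hzm, fun z hzm hz1 => ?_⟩
  obtain ⟨hden, hS1, hS2⟩ :=
    S_bounds_of_one_le hm hk hodd hh (z := -z) (by linarith) (by linarith)
  rw [neg_neg, add_comm] at hden
  rw [S_neg] at hS1 hS2
  exact ⟨hden, by linarith, by linarith⟩
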